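/- arXiv:1012.3127 — 2 statements merged into one kernel-verified Lean document; each statement's English description precedes it below -/
import Mathlib

section
/- Let a ≥ 2 be an integer and k = ⌈√a⌉. For every positive integer n, every a-union-free subfamily of the Erdős–Shelah grid family {X_{ij} : 1 ≤ i, j ≤ n} has size at most 2kn. -/
/-- A family of sets is *`a`-union-free* if there are no `a+1` distinct sets
`X₁, …, X_{a+1}` in the family with `X₁ ∪ ⋯ ∪ X_a = X_{a+1}`. -/
def AUnionFree (a : ℕ) (F : Finset (Finset ℕ)) : Prop :=
  ∀ X : Fin (a + 1) → Finset ℕ, Function.Injective X → (∀ i, X i ∈ F) →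
    Finset.univ.sup (fun i : Fin a => X i.castSucc) ≠ X (Fin.last a)

/-- The set `X_{ij} = {x ∈ ℕ : n + 1 - i ≤ x ≤ n + j}`. -/
def gridSet (n i j : ℕ) : Finset ℕ := Finset.Icc (n + 1 - i) (n + j)

/-- The Erdős–Shelah grid family `{X_{ij} : 1 ≤ i, j ≤ n}`. -/
def ESgrid (n : ℕ) : Finset (Finset ℕ) :=
  (Finset.Icc 1 n ×ˢ Finset.Icc 1 n).image fun p => gridSet n p.1 p.2

/-!
Identify `X_{ij}` with the point `(i, j)` and the subfamily with a set `S` of points. Then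
`X_p ∪ X_q = X_{p ⊔ q}`, so a union of grid sets is the grid set of the coordinatewise maximum of
their points. Call a point of `S` rich if at least `k` points of `S` lie to its left in its row.
A row contains at most `k` points that are not rich, and a column at most `k` rich points with
fewer than `k` rich points below them; so if `|S| > 2kn`, some rich point `p` has `k` rich points
below it. These points and the points to their left give at least `k² ≥ a` points strictly below
`p` in the product order, one of them in the row of `p` and one in its column. Any `a` of them
that include those two have join `p`, so their grid sets have union `X_p`.
-/

open Finset Function

lemma AUnionFree.sup_ne {a : ℕ} {F : Finset (Finset ℕ)} (hF : AUnionFree a F)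
    {T : Finset (Finset ℕ)} (hTF : T ⊆ F) (hTa : #T = a) {X : Finset ℕ} (hX : X ∈ F)
    (hXT : X ∉ T) : T.sup id ≠ X := by
  let e : T ≃ Fin a := T.equivFinOfCardEq hTa
  let Y : Fin (a + 1) → Finset ℕ := Fin.snoc (fun i => (e.symm i : Finset ℕ)) X
  have hY : Injective Y := by
    refine Fin.snoc_injective_of_injective (Subtype.val_injective.comp e.symm.injective) ?_
    rintro ⟨i, hi⟩
    exact hXT (hi ▸ (e.symm i).2)
  have hYF : ∀ i, Y i ∈ F :=
    Fin.lastCases (by simpa [Y] using hX) fun i => by simpa [Y] using hTF (e.symm i).2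
  have hsup : univ.sup (fun i : Fin a => Y i.castSucc) = T.sup id := by
    simp only [Y, Fin.snoc_castSucc]
    rw [← map_univ_equiv e, sup_map, ← sup_attach]
    simpa using sup_attach T id
  simpa only [hsup, Y, Fin.snoc_last] using hF Y hY hYF

lemma AUnionFree.sup_image_ne {α : Type*} [DecidableEq α] {a : ℕ} {S : Finset α} {f : α → Finset ℕ}
    (hf : Set.InjOn f S) (hF : AUnionFree a (S.image f)) {T : Finset α} (hTS : T ⊆ S) (hTa : #T = a)
    {p : α} (hp : p ∈ S) (hpT : p ∉ T) : T.sup f ≠ f p := by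
  rw [← id_comp f, ← sup_image]
  refine hF.sup_ne (image_subset_image hTS) ?_ (mem_image_of_mem f hp) ?_
  · rwa [card_image_of_injOn (hf.mono (coe_subset.2 hTS))]
  · rw [mem_image]
    rintro ⟨q, hq, hqp⟩
    exact hpT (hf (hTS hq) hp hqp ▸ hq)

lemma gridSet_max_max (n i j i' j' : ℕ) :
    gridSet n (max i i') (max j j') = gridSet n i j ∪ gridSet n i' j' := by
  ext x
  simp only [gridSet, mem_union, mem_Icc]
  omega

lemma sup_gridSet (n : ℕ) (T : Finset (ℕ × ℕ)) :
    T.sup (fun p => gridSet n p.1 p.2) = gridSet n (T.sup id).1 (T.sup id).2 :=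
  (apply_sup_eq_sup_comp (fun p : ℕ × ℕ => gridSet n p.1 p.2)
    (fun p q => gridSet_max_max n p.1 p.2 q.1 q.2) (by simp [gridSet])).symm

lemma gridSet_injOn (n : ℕ) :
    Set.InjOn (fun p : ℕ × ℕ => gridSet n p.1 p.2) ↑(Icc 1 n ×ˢ Icc 1 n) := by
  rintro ⟨i, j⟩ hp ⟨i', j'⟩ hq h
  simp only [mem_coe, mem_product, mem_Icc] at hp hq
  have hIcc : Set.Icc (n + 1 - i) (n + j) = Set.Icc (n + 1 - i') (n + j') := by
    simpa [gridSet] using congrArg ((↑) : Finset ℕ → Set ℕ) h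
  rw [Set.Icc_eq_Icc_iff (by omega)] at hIcc
  rw [Prod.mk.injEq]
  omega

section FiberBelow

variable {α β γ : Type*} [DecidableEq β] [LinearOrder γ]

def fiberBelow (S : Finset α) (f : α → β) (g : α → γ) (x : α) : Finset α :=
  {y ∈ S | f y = f x ∧ g y < g x}

variable {S : Finset α} {f : α → β} {g : α → γ}

@[simp]
lemma mem_fiberBelow {x y : α} : y ∈ fiberBelow S f g x ↔ y ∈ S ∧ f y = f x ∧ g y < g x :=
  mem_filter

lemma card_fiberBelow_lt_card_fiberBelow {x y : α} (hx : x ∈ S) (hf : f x = f y) (hg : g x < g y) :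
    #(fiberBelow S f g x) < #(fiberBelow S f g y) := by
  refine card_lt_card ⟨fun z hz => ?_, fun h => ?_⟩
  · rw [mem_fiberBelow] at hz ⊢
    exact ⟨hz.1, hz.2.1.trans hf, hz.2.2.trans hg⟩
  · simpa using h (mem_fiberBelow.2 ⟨hx, hf, hg⟩)

lemma card_filter_card_fiberBelow_lt_le (hinj : Set.InjOn (fun x => (f x, g x)) S) {R : Finset β}
    (hR : ∀ x ∈ S, f x ∈ R) (k : ℕ) : #{x ∈ S | #(fiberBelow S f g x) < k} ≤ k * #R := by
  calc #{x ∈ S | #(fiberBelow S f g x) < k}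
      ≤ #(R ×ˢ range k) := by
        refine card_le_card_of_injOn (fun x => (f x, #(fiberBelow S f g x))) (fun x hx => ?_) ?_
        · rw [coe_filter] at hx
          simpa using ⟨hR x hx.1, hx.2⟩
        · intro x hx y hy hxy
          rw [coe_filter] at hx hy
          obtain ⟨hf, hc⟩ := Prod.mk.inj hxy
          rcases lt_trichotomy (g x) (g y) with hg | hg | hg
          · exact absurd hc (card_fiberBelow_lt_card_fiberBelow hx.1 hf hg).ne
          · exact hinj hx.1 hy.1 (Prod.ext hf hg)
          · exact absurd hc (card_fiberBelow_lt_card_fiberBelow hy.1 hf.symm hg).ne'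
    _ = k * #R := by rw [card_product, card_range, mul_comm]

end FiberBelow

section RowRich

variable {α β : Type*} [LinearOrder α] [LinearOrder β]

def rowRich (S : Finset (α × β)) (k : ℕ) : Finset (α × β) :=
  {x ∈ S | k ≤ #(fiberBelow S Prod.fst Prod.snd x)}

lemma exists_rowRich_with_rowRich_below {S : Finset (α × β)} {R : Finset α} {C : Finset β}
    (hS : S ⊆ R ×ˢ C) {k : ℕ} (hcard : k * #R + k * #C < #S) :
    ∃ p ∈ rowRich S k, k ≤ #(fiberBelow (rowRich S k) Prod.snd Prod.fst p) := by
  have hsplit := card_filter_add_card_filter_not (s := S)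
    (fun x => k ≤ #(fiberBelow S Prod.fst Prod.snd x))
  simp only [not_le] at hsplit
  have hpoor : #{x ∈ S | #(fiberBelow S Prod.fst Prod.snd x) < k} ≤ k * #R :=
    card_filter_card_fiberBelow_lt_le (fun x _ y _ h => h) (fun x hx => (mem_product.1 (hS hx)).1) k
  have hrich : k * #C < #(rowRich S k) := by
    unfold rowRich
    omega
  by_contra! hfew
  have := card_filter_card_fiberBelow_lt_le (S := rowRich S k) (f := Prod.snd) (g := Prod.fst)
    (fun x _ y _ h => Prod.ext (Prod.mk.inj h).2 (Prod.mk.inj h).1)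
    (fun x hx => (mem_product.1 (hS (mem_filter.1 hx).1)).2) k
  rw [filter_true_of_mem hfew] at this
  omega

lemma exists_large_set_lt_of_rowRich {S : Finset (α × β)} {k : ℕ} (hk : 0 < k) {p : α × β}
    (hp : p ∈ rowRich S k) (hcol : k ≤ #(fiberBelow (rowRich S k) Prod.snd Prod.fst p)) :
    ∃ P ⊆ S, k * k ≤ #P ∧ (∀ q ∈ P, q < p) ∧ ∃ r ∈ P, ∃ c ∈ P, r ⊔ c = p := by
  set B := fiberBelow (rowRich S k) Prod.snd Prod.fst p
  have hB : ∀ b ∈ B, (b ∈ S ∧ k ≤ #(fiberBelow S Prod.fst Prod.snd b)) ∧ b.2 = p.2 ∧ b.1 < p.1 :=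
    fun b hb => by simpa [B, rowRich] using hb
  obtain ⟨r, hr⟩ := card_pos.1 (hk.trans_le (mem_filter.1 hp).2)
  obtain ⟨c, hc⟩ := card_pos.1 (hk.trans_le hcol)
  rw [mem_fiberBelow] at hr
  obtain ⟨⟨hcS, -⟩, hc2, hc1⟩ := hB c hc
  have hdisj : (B : Set (α × β)).PairwiseDisjoint (fiberBelow S Prod.fst Prod.snd) := by
    intro b hb b' hb' hne
    refine disjoint_left.2 fun q hq hq' => hne (Prod.ext ?_ ?_)
    · exact (mem_fiberBelow.1 hq).2.1.symm.trans (mem_fiberBelow.1 hq').2.1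
    · exact (hB b hb).2.1.trans (hB b' hb').2.1.symm
  refine ⟨insert r (insert c (B.biUnion (fiberBelow S Prod.fst Prod.snd))), ?_, ?_, ?_,
    r, mem_insert_self _ _, c, mem_insert_of_mem (mem_insert_self _ _), ?_⟩
  · exact insert_subset hr.1 (insert_subset hcS (biUnion_subset.2 fun b _ => filter_subset _ _))
  · calc k * k ≤ #B • k := Nat.mul_le_mul_right k hcol
      _ ≤ ∑ b ∈ B, #(fiberBelow S Prod.fst Prod.snd b) :=
          card_nsmul_le_sum _ _ _ fun b hb => (hB b hb).1.2
      _ = #(B.biUnion (fiberBelow S Prod.fst Prod.snd)) := (card_biUnion hdisj).symm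
      _ ≤ _ := (subset_insert _ _).trans (subset_insert _ _) |> card_le_card
  · intro q hq
    rw [Prod.lt_iff]
    simp only [mem_insert, mem_biUnion, mem_fiberBelow] at hq
    rcases hq with rfl | rfl | ⟨b, hb, -, hqb1, hqb2⟩
    · exact Or.inr ⟨hr.2.1.le, hr.2.2⟩
    · exact Or.inl ⟨hc1, hc2.le⟩
    · obtain ⟨-, hb2, hb1⟩ := hB b hb
      exact Or.inl ⟨hqb1 ▸ hb1, (hqb2.trans_eq hb2).le⟩
  · exact Prod.ext (sup_eq_left.2 (hc1.le.trans_eq hr.2.1.symm) |>.trans hr.2.1)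
      (sup_eq_right.2 (hr.2.2.le.trans_eq hc2.symm) |>.trans hc2)

end RowRich

lemma exists_subset_card_eq_sup_eq {α : Type*} [SemilatticeSup α] [OrderBot α] [DecidableEq α]
    {P : Finset α} {p r c : α} {a : ℕ} (h2a : 2 ≤ a) (haP : a ≤ #P) (hle : ∀ q ∈ P, q ≤ p)
    (hr : r ∈ P) (hc : c ∈ P) (hrc : r ⊔ c = p) : ∃ T ⊆ P, #T = a ∧ T.sup id = p := by
  obtain ⟨T, hrcT, hTP, hTa⟩ := exists_subsuperset_card_eq
    (insert_subset hr (singleton_subset_iff.2 hc)) (card_le_two.trans h2a) haP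
  refine ⟨T, hTP, hTa, le_antisymm (Finset.sup_le fun q hq => hle q (hTP hq)) ?_⟩
  rw [← hrc]
  exact sup_le (le_sup (f := id) (hrcT (mem_insert_self _ _)))
    (le_sup (f := id) (hrcT (mem_insert_of_mem (mem_singleton_self _))))

theorem esgrid_aUnionFree_le_general (a k : ℕ) (ha : 2 ≤ a) (hk : k = ⌈Real.sqrt a⌉₊)
    (n : ℕ) (G : Finset (Finset ℕ)) (hG : G ⊆ ESgrid n) (h : AUnionFree a G) :
    G.card ≤ 2 * k * n := by
  have hak : a ≤ k * k := by
    have : (a : ℝ) ≤ (k : ℝ) ^ 2 := (Real.sqrt_le_left k.cast_nonneg).1 (hk ▸ Nat.le_ceil _)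
    rw [← sq]
    exact_mod_cast this
  have hk0 : 0 < k := Nat.pos_of_ne_zero fun hk0 => by simp [hk0] at hak; omega
  obtain ⟨S, hS, rfl⟩ := subset_image_iff.1 hG
  have hinj := (gridSet_injOn n).mono (coe_subset.2 hS)
  rw [card_image_of_injOn hinj]
  by_contra! hlarge
  obtain ⟨p, hp, hcol⟩ :=
    exists_rowRich_with_rowRich_below hS (by simpa [two_mul, add_mul] using hlarge)
  obtain ⟨P, hPS, hkP, hlt, r, hr, c, hc, hrc⟩ := exists_large_set_lt_of_rowRich hk0 hp hcol
  obtain ⟨T, hTP, hTa, hsup⟩ :=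
    exists_subset_card_eq_sup_eq ha (hak.trans hkP) (fun q hq => (hlt q hq).le) hr hc hrc
  refine h.sup_image_ne hinj (hTP.trans hPS) hTa (mem_filter.1 hp).1
    (fun hpT => (hlt p (hTP hpT)).false) ?_
  rw [sup_gridSet, hsup]

/-- For `a ≥ 2` and `k = ⌈√a⌉`, every `a`-union-free subfamily of the
Erdős–Shelah grid family `{X_{ij} : 1 ≤ i, j ≤ n}` has size at most `2kn`. -/
theorem esgrid_aUnionFree_le (a k : ℕ) (ha : 2 ≤ a) (hk : k = ⌈Real.sqrt a⌉₊)
    (n : ℕ) (hn : 0 < n)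
    (G : Finset (Finset ℕ)) (hG : G ⊆ ESgrid n) (h : AUnionFree a G) :
    G.card ≤ 2 * k * n :=
  esgrid_aUnionFree_le_general a k ha hk n G hG h
end

section
/- Let a ≥ 2 be an integer and k = ⌈√a⌉. For every positive integer n, there exists a family of kn² distinct finite sets such that every a-union-free subfamily has size at most a + 4kn. -/
open Finset

namespace AUnionFree

variable {a : ℕ} {G : Finset (Finset ℕ)}

theorem sup_ne_s16 (hG : AUnionFree a G) {C : Finset (Finset ℕ)} (hCG : C ⊆ G) (hC : #C = a)
    {Y : Finset ℕ} (hYG : Y ∈ G) (hYC : Y ∉ C) : C.sup id ≠ Y := by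
  set e := (C.equivFinOfCardEq hC).symm
  have hsup : univ.sup (fun i => (e i : Finset ℕ)) = C.sup id := by
    rw [← Function.comp_def Subtype.val e, ← sup_image, image_univ_equiv, univ_eq_attach]
    exact sup_attach C id
  have hinj : Function.Injective (Fin.snoc (fun i => (e i : Finset ℕ)) Y : Fin (a + 1) → _) :=
    Fin.snoc_injective_of_injective (Subtype.val_injective.comp e.injective)
      (by rintro ⟨i, hi⟩; exact hYC (hi ▸ (e i).2))
  have hmem : ∀ i, (Fin.snoc (fun i => (e i : Finset ℕ)) Y : Fin (a + 1) → _) i ∈ G :=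
    Fin.lastCases (by simpa using hYG) (fun i => by simpa using hCG (e i).2)
  simpa [hsup] using hG _ hinj hmem

theorem card_filter_ssubset_lt (hG : AUnionFree a G) (ha : 2 ≤ a) {X₁ X₂ Y : Finset ℕ}
    (hX₁ : X₁ ∈ G) (hX₂ : X₂ ∈ G) (hY : Y ∈ G) (h₁ : X₁ ⊂ Y) (h₂ : X₂ ⊂ Y)
    (hunion : X₁ ∪ X₂ = Y) : #{X ∈ G | X ⊂ Y} < a := by
  by_contra! hcard
  have hne : X₁ ≠ X₂ := by
    rintro rfl
    exact h₁.ne (by simpa using hunion)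
  have hpair : {X₁, X₂} ⊆ {X ∈ G | X ⊂ Y} := by
    simp [insert_subset_iff, hX₁, hX₂, h₁, h₂]
  obtain ⟨C, hpC, hCG, hC⟩ :=
    exists_subsuperset_card_eq hpair (by rw [card_pair hne]; exact ha) hcard
  refine hG.sup_ne_s16 (hCG.trans (filter_subset _ _)) hC hY
    (fun hYC => (mem_filter.mp (hCG hYC)).2.ne rfl) (le_antisymm ?_ ?_)
  · exact Finset.sup_le fun X hX => (mem_filter.mp (hCG hX)).2.le
  · rw [← hunion]
    exact union_subset (le_sup (f := id) (hpC (mem_insert_self _ _)))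
      (le_sup (f := id) (hpC (mem_insert_of_mem (mem_singleton_self _))))

end AUnionFree

theorem card_filter_not_exists_lt_le {α β : Type*} [DecidableEq β] {P : Finset α}
    {t : Finset β} (f : α → β) (g : α → ℕ) (hf : ∀ v ∈ P, f v ∈ t)
    (hfg : Set.InjOn (fun v => (f v, g v)) P) :
    #{v ∈ P | ¬ ∃ w ∈ P, f w = f v ∧ g w < g v} ≤ #t := by
  refine card_le_card_of_injOn f (fun v hv => hf v (mem_filter.mp hv).1) fun v hv w hw hvw => ?_
  obtain ⟨hvP, hv⟩ := mem_filter.mp hv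
  obtain ⟨hwP, hw⟩ := mem_filter.mp hw
  refine hfg hvP hwP (Prod.ext hvw ?_)
  rcases lt_trichotomy (g v) (g w) with hlt | heq | hgt
  · exact absurd ⟨v, hvP, hvw, hlt⟩ hw
  · exact heq
  · exact absurd ⟨w, hwP, hvw.symm, hgt⟩ hv

section Grid

variable (Q : Finset (ℕ × ℕ))

def rowsAbove (q : ℕ × ℕ) : Finset ℕ := {y ∈ Q.image Prod.snd | ∃ p ∈ Q, q ≤ p ∧ p.2 = y}

variable {Q}

theorem card_filter_rowsAbove_lt_card {q : ℕ × ℕ} (hq : q ∈ Q) :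
    #{y ∈ rowsAbove Q q | q.2 < y} < #(rowsAbove Q q) := by
  refine card_lt_card (filter_ssubset.mpr ⟨q.2, ?_, lt_irrefl _⟩)
  exact mem_filter.mpr ⟨mem_image_of_mem _ hq, q, hq, le_rfl, rfl⟩

theorem card_filter_rowsAbove_lt_lt {q q' : ℕ × ℕ} (hq' : q' ∈ Q) (h₁ : q.1 = q'.1)
    (h₂ : q.2 < q'.2) :
    #{y ∈ rowsAbove Q q' | q'.2 < y} < #{y ∈ rowsAbove Q q | q.2 < y} := by
  have hqq' : q ≤ q' := Prod.mk_le_mk.mpr ⟨h₁.le, h₂.le⟩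
  refine card_lt_card ⟨fun y hy => ?_, fun hsub => ?_⟩
  · simp only [rowsAbove, mem_filter] at hy ⊢
    obtain ⟨⟨hyQ, p, hp, hq'p, rfl⟩, hlt⟩ := hy
    exact ⟨⟨hyQ, p, hp, hqq'.trans hq'p, rfl⟩, h₂.trans hlt⟩
  · have := hsub (mem_filter.mpr ⟨mem_filter.mpr ⟨mem_image_of_mem _ hq', q', hq', hqq', rfl⟩, h₂⟩)
    exact lt_irrefl _ (mem_filter.mp this).2

theorem sum_card_rowsAbove_le {a : ℕ} (hdown : ∀ p ∈ Q, #{q ∈ Q | q ≤ p} ≤ a) :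
    ∑ q ∈ Q, #(rowsAbove Q q) ≤ a * #(Q.image Prod.snd) := by
  rw [mul_comm]
  calc ∑ q ∈ Q, #(rowsAbove Q q)
      = ∑ y ∈ Q.image Prod.snd, #{q ∈ Q | ∃ p ∈ Q, q ≤ p ∧ p.2 = y} :=
        sum_card_bipartiteAbove_eq_sum_card_bipartiteBelow _
    _ ≤ ∑ _y ∈ Q.image Prod.snd, a := by
        refine sum_le_sum fun y hy => ?_
        -- every point below a point of row `y` lies below the rightmost point of that row
        obtain ⟨p₀, hp₀, hmax⟩ := exists_max_image {p ∈ Q | p.2 = y} Prod.fst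
          (by simpa [Finset.Nonempty] using hy)
        rw [mem_filter] at hp₀
        refine le_trans (card_le_card fun q hq => ?_) (hdown p₀ hp₀.1)
        obtain ⟨hqQ, p, hp, hqp, rfl⟩ := mem_filter.mp hq
        exact mem_filter.mpr ⟨hqQ, Prod.mk_le_mk.mpr
          ⟨hqp.1.trans (hmax p (mem_filter.mpr ⟨hp, rfl⟩)), hp₀.2 ▸ hqp.2⟩⟩
    _ = _ := by rw [sum_const, smul_eq_mul]

theorem card_filter_card_rowsAbove_lt_le {m k : ℕ} (hQ : ∀ q ∈ Q, q.1 < m) :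
    #{q ∈ Q | #{y ∈ rowsAbove Q q | q.2 < y} < k} ≤ k * m := by
  refine (card_le_card_of_injOn (t := range m ×ˢ range k)
    (fun q => (q.1, #{y ∈ rowsAbove Q q | q.2 < y})) ?_ ?_).trans (by simp [mul_comm])
  · intro q hq
    obtain ⟨hqQ, hlt⟩ := mem_filter.mp hq
    exact mem_product.mpr ⟨mem_range.mpr (hQ q hqQ), mem_range.mpr hlt⟩
  · intro q hq q' hq' heq
    obtain ⟨h₁, h₂⟩ := Prod.mk.inj heq
    have hq := (mem_filter.mp hq).1
    have hq' := (mem_filter.mp hq').1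
    rcases lt_trichotomy q.2 q'.2 with hlt | heq2 | hgt
    · exact absurd h₂ (card_filter_rowsAbove_lt_lt hq' h₁ hlt).ne'
    · exact Prod.ext h₁ heq2
    · exact absurd h₂ (card_filter_rowsAbove_lt_lt hq h₁.symm hgt).ne

/- `δ q`, the number of rows above `q` that reach the column of `q`, strictly decreases up each
column, so few points have `δ q < k`; and `∑ (1 + δ q) ≤ a · n` by double counting against the
rightmost point of each row, so few points have `δ q ≥ k`. -/
theorem card_le_of_forall_card_filter_le_le {m n a k : ℕ} (hQ : Q ⊆ range m ×ˢ range n)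
    (hak : a ≤ k * k) (hdown : ∀ p ∈ Q, #{q ∈ Q | q ≤ p} ≤ a) : #Q ≤ k * m + k * n := by
  set δ : ℕ × ℕ → ℕ := fun q => #{y ∈ rowsAbove Q q | q.2 < y}
  have hrows : #(Q.image Prod.snd) ≤ n := by
    refine (card_le_card fun y hy => ?_).trans (card_range n).le
    obtain ⟨q, hq, rfl⟩ := mem_image.mp hy
    exact (mem_product.mp (hQ hq)).2
  have hbig : #{q ∈ Q | ¬ δ q < k} * (k + 1) ≤ (k * n) * (k + 1) :=
    calc #{q ∈ Q | ¬ δ q < k} * (k + 1)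
        ≤ ∑ q ∈ Q with ¬ δ q < k, (δ q + 1) := by
          rw [← smul_eq_mul]
          exact card_nsmul_le_sum _ _ _ fun q hq => by
            have := (mem_filter.mp hq).2
            omega
      _ ≤ ∑ q ∈ Q, #(rowsAbove Q q) :=
          (sum_le_sum_of_subset (filter_subset _ _)).trans
            (sum_le_sum fun q hq => card_filter_rowsAbove_lt_card hq)
      _ ≤ a * n := (sum_card_rowsAbove_le hdown).trans (Nat.mul_le_mul_left _ hrows)
      _ ≤ (k * n) * (k + 1) := by nlinarith
  have hsmall : #{q ∈ Q | δ q < k} ≤ k * m :=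
    card_filter_card_rowsAbove_lt_le fun q hq => mem_range.mp (mem_product.mp (hQ hq)).1
  rw [← card_filter_add_card_filter_not (s := Q) (p := fun q => δ q < k)]
  exact add_le_add hsmall (Nat.le_of_mul_le_mul_right hbig k.succ_pos)

end Grid

def blockSet (n : ℕ) (v : ℕ × ℕ × ℕ) : Finset ℕ :=
  Iic (2 * n * v.1 + v.2.1) ∪ Icc (2 * n * v.1 + n) (2 * n * v.1 + n + v.2.2)

def grid (k n : ℕ) : Finset (ℕ × ℕ × ℕ) := range k ×ˢ range n ×ˢ range n

theorem mem_grid {k n : ℕ} {v : ℕ × ℕ × ℕ} :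
    v ∈ grid k n ↔ v.1 < k ∧ v.2.1 < n ∧ v.2.2 < n := by
  simp [grid]

theorem mem_blockSet {n m i x y : ℕ} :
    m ∈ blockSet n (i, x, y) ↔ m ≤ 2 * n * i + x ∨ 2 * n * i + n ≤ m ∧ m ≤ 2 * n * i + n + y := by
  simp [blockSet]

theorem blockSet_subset_blockSet_iff {k n : ℕ} {v w : ℕ × ℕ × ℕ} (hv : v ∈ grid k n)
    (hw : w ∈ grid k n) : blockSet n w ⊆ blockSet n v ↔ toLex w ≤ toLex v := by
  rw [mem_grid] at hv hw
  obtain ⟨i, x, y⟩ := v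
  obtain ⟨i', x', y'⟩ := w
  simp only [Prod.Lex.toLex_le_toLex, Prod.mk_le_mk] at hv hw ⊢
  -- levels are spaced `2 * n` apart, more than the span `n + y` of a block
  have hspace : ∀ {j j' : ℕ}, j < j' → 2 * n * j + 2 * n ≤ 2 * n * j' := fun h => by
    nlinarith
  constructor
  · intro h
    have h₁ := mem_blockSet.mp (h (mem_blockSet.mpr (Or.inl le_rfl)))
    have h₂ := mem_blockSet.mp (h (mem_blockSet.mpr (Or.inr ⟨Nat.le_add_right _ y', le_rfl⟩)))
    rcases lt_trichotomy i' i with hlt | rfl | hgt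
    · exact Or.inl hlt
    · omega
    · have := hspace hgt
      omega
  · rintro (hlt | ⟨rfl, hx, hy⟩) m hm <;> rw [mem_blockSet] at hm ⊢
    · have := hspace hlt
      omega
    · omega

theorem blockSet_ssubset_blockSet_iff {k n : ℕ} {v w : ℕ × ℕ × ℕ} (hv : v ∈ grid k n)
    (hw : w ∈ grid k n) : blockSet n w ⊂ blockSet n v ↔ toLex w < toLex v := by
  rw [ssubset_iff_subset_not_subset, lt_iff_le_not_ge, blockSet_subset_blockSet_iff hv hw,
    blockSet_subset_blockSet_iff hw hv]

theorem blockSet_injOn (k n : ℕ) : Set.InjOn (blockSet n) (grid k n) := fun _ hv _ hw h =>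
  toLex.injective <| le_antisymm ((blockSet_subset_blockSet_iff hw hv).mp h.subset)
    ((blockSet_subset_blockSet_iff hv hw).mp h.symm.subset)

theorem blockSet_union_blockSet {n i x y x' y' : ℕ} (hx : x' ≤ x) (hy : y' ≤ y) :
    blockSet n (i, x, y') ∪ blockSet n (i, x', y) = blockSet n (i, x, y) := by
  ext m
  simp only [mem_union, mem_blockSet]
  omega

section Counting

open scoped Classical

def IsInterior (P : Finset (ℕ × ℕ × ℕ)) (v : ℕ × ℕ × ℕ) : Prop :=
  (∃ w ∈ P, (w.1, w.2.1) = (v.1, v.2.1) ∧ w.2.2 < v.2.2) ∧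
    ∃ w ∈ P, (w.1, w.2.2) = (v.1, v.2.2) ∧ w.2.1 < v.2.1

variable {P : Finset (ℕ × ℕ × ℕ)} {k n a : ℕ}

theorem card_filter_not_isInterior_le (hP : P ⊆ grid k n) :
    #{v ∈ P | ¬ IsInterior P v} ≤ k * n + k * n := by
  have hkn : #(range k ×ˢ range n) = k * n := by simp
  have hcol := card_filter_not_exists_lt_le (P := P) (t := range k ×ˢ range n)
    (fun v => (v.1, v.2.1)) (fun v => v.2.2)
    (fun v hv => by simp [(mem_grid.mp (hP hv)).1, (mem_grid.mp (hP hv)).2.1])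
    (fun v _ w _ h => by simp_all [Prod.ext_iff])
  have hrow := card_filter_not_exists_lt_le (P := P) (t := range k ×ˢ range n)
    (fun v => (v.1, v.2.2)) (fun v => v.2.1)
    (fun v hv => by simp [(mem_grid.mp (hP hv)).1, (mem_grid.mp (hP hv)).2.2])
    (fun v _ w _ h => by simp_all [Prod.ext_iff])
  rw [hkn] at hcol hrow
  refine (card_le_card fun v hv => ?_).trans ((card_union_le _ _).trans (add_le_add hcol hrow))
  obtain ⟨hvP, hv⟩ := mem_filter.mp hv
  rw [IsInterior, not_and_or] at hv
  rcases hv with hv | hv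
  · exact mem_union_left _ (mem_filter.mpr ⟨hvP, hv⟩)
  · exact mem_union_right _ (mem_filter.mpr ⟨hvP, hv⟩)

theorem card_filter_isInterior_fst_eq_le (hP : P ⊆ grid k n) (hak : a ≤ k * k)
    (hlow : ∀ v ∈ P, IsInterior P v → #{w ∈ P | toLex w < toLex v} < a) (i : ℕ) :
    #{v ∈ P | IsInterior P v ∧ v.1 = i} ≤ k * n + k * n := by
  set I := {v ∈ P | IsInterior P v ∧ v.1 = i}
  have hsnd : Set.InjOn Prod.snd (I : Set (ℕ × ℕ × ℕ)) := fun v hv w hw h =>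
    Prod.ext (((mem_filter.mp hv).2.2).trans (mem_filter.mp hw).2.2.symm) h
  rw [← card_image_of_injOn hsnd]
  refine card_le_of_forall_card_filter_le_le (fun p hp => ?_) hak fun p hp => ?_
  · obtain ⟨v, hv, rfl⟩ := mem_image.mp hp
    have := mem_grid.mp (hP (mem_filter.mp hv).1)
    simp [this.2.1, this.2.2]
  · obtain ⟨v, hv, rfl⟩ := mem_image.mp hp
    obtain ⟨hvP, hvI, hvi⟩ := mem_filter.mp hv
    have hsub : {q ∈ I.image Prod.snd | q ≤ v.2} ⊆
        insert v.2 ({w ∈ P | toLex w < toLex v}.image Prod.snd) := by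
      intro q hq
      obtain ⟨hqI, hqv⟩ := mem_filter.mp hq
      obtain ⟨w, hw, rfl⟩ := mem_image.mp hqI
      obtain ⟨hwP, -, hwi⟩ := mem_filter.mp hw
      rcases hqv.eq_or_lt with heq | hlt
      · exact heq ▸ mem_insert_self _ _
      · refine mem_insert_of_mem (mem_image_of_mem _ (mem_filter.mpr ⟨hwP, ?_⟩))
        exact Prod.Lex.toLex_lt_toLex.mpr (Or.inr ⟨hwi.trans hvi.symm, hlt⟩)
    calc #{q ∈ I.image Prod.snd | q ≤ v.2}
        ≤ #({w ∈ P | toLex w < toLex v}.image Prod.snd) + 1 :=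
          (card_le_card hsub).trans (card_insert_le _ _)
      _ ≤ #{w ∈ P | toLex w < toLex v} + 1 := Nat.add_le_add_right card_image_le 1
      _ ≤ a := hlow v hvP hvI

theorem card_le_of_forall_isInterior_card_lt (hP : P ⊆ grid k n) (hak : a ≤ k * k)
    (hlow : ∀ v ∈ P, IsInterior P v → #{w ∈ P | toLex w < toLex v} < a) :
    #P ≤ a + 4 * k * n := by
  have hint : #{v ∈ P | IsInterior P v} ≤ a + (k * n + k * n) := by
    rcases eq_empty_or_nonempty {v ∈ P | IsInterior P v} with hempty | hne
    · simp [hempty]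
    obtain ⟨u, hu, hmax⟩ := exists_max_image _ Prod.fst hne
    obtain ⟨huP, huI⟩ := mem_filter.mp hu
    have hsub : {v ∈ P | IsInterior P v} ⊆
        {w ∈ P | toLex w < toLex u} ∪ {v ∈ P | IsInterior P v ∧ v.1 = u.1} := by
      intro v hv
      obtain ⟨hvP, hvI⟩ := mem_filter.mp hv
      rcases (hmax v hv).lt_or_eq with hlt | heq
      · exact mem_union_left _ (mem_filter.mpr ⟨hvP, Prod.Lex.toLex_lt_toLex.mpr (Or.inl hlt)⟩)
      · exact mem_union_right _ (mem_filter.mpr ⟨hvP, hvI, heq⟩)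
    exact (card_le_card hsub).trans ((card_union_le _ _).trans (add_le_add
      (hlow u huP huI).le (card_filter_isInterior_fst_eq_le hP hak hlow u.1)))
  rw [← card_filter_add_card_filter_not (s := P) (p := IsInterior P)]
  have := card_filter_not_isInterior_le hP
  linarith

theorem AUnionFree.card_filter_toLex_lt_lt {a k n : ℕ} {G : Finset (Finset ℕ)}
    {P : Finset (ℕ × ℕ × ℕ)} (hG : AUnionFree a G) (ha : 2 ≤ a) (hP : P ⊆ grid k n)
    (hPG : ∀ v ∈ P, blockSet n v ∈ G) {v : ℕ × ℕ × ℕ} (hv : v ∈ P) (hvI : IsInterior P v) :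
    #{w ∈ P | toLex w < toLex v} < a := by
  obtain ⟨i, x, y⟩ := v
  obtain ⟨⟨⟨i₁, x₁, y₁⟩, hq₁, hq₁v, hy₁⟩, ⟨⟨i₂, x₂, y₂⟩, hq₂, hq₂v, hx₂⟩⟩ := hvI
  simp only [Prod.mk.injEq] at hq₁v hq₂v hy₁ hx₂
  obtain ⟨hi₁, hx₁⟩ := hq₁v
  obtain ⟨hi₂, hy₂⟩ := hq₂v
  subst i₁ x₁ i₂ y₂
  have hlt : ∀ {w}, w ∈ P → toLex w < toLex (i, x, y) →
      blockSet n w ⊂ blockSet n (i, x, y) := fun hw h =>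
    (blockSet_ssubset_blockSet_iff (hP hv) (hP hw)).mpr h
  calc #{w ∈ P | toLex w < toLex (i, x, y)}
      ≤ #{X ∈ G | X ⊂ blockSet n (i, x, y)} := by
        refine card_le_card_of_injOn (blockSet n) (fun w hw => ?_)
          ((blockSet_injOn k n).mono fun w hw => hP (mem_filter.mp hw).1)
        obtain ⟨hwP, hwv⟩ := mem_filter.mp hw
        exact mem_filter.mpr ⟨hPG w hwP, hlt hwP hwv⟩
    _ < a := by
      refine hG.card_filter_ssubset_lt ha (hPG _ hq₁) (hPG _ hq₂) (hPG _ hv)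
        (hlt hq₁ ?_) (hlt hq₂ ?_) (blockSet_union_blockSet hx₂.le hy₁.le)
      · exact Prod.Lex.toLex_lt_toLex.mpr (Or.inr ⟨rfl, Prod.mk_lt_mk_iff_right.mpr hy₁⟩)
      · exact Prod.Lex.toLex_lt_toLex.mpr (Or.inr ⟨rfl, Prod.mk_lt_mk_iff_left.mpr hx₂⟩)

end Counting

theorem le_ceil_sqrt_mul_self (a : ℕ) : a ≤ ⌈Real.sqrt a⌉₊ * ⌈Real.sqrt a⌉₊ := by
  have h := (Real.sqrt_le_left (Nat.cast_nonneg _)).mp (Nat.le_ceil (Real.sqrt a))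
  exact_mod_cast h.trans_eq (sq _)

theorem exists_family_small_aUnionFree_general (a k : ℕ) (ha : 2 ≤ a)
    (hk : k = ⌈Real.sqrt a⌉₊) (n : ℕ) :
    ∃ F : Finset (Finset ℕ), F.card = k * n ^ 2 ∧
      ∀ G ⊆ F, AUnionFree a G → G.card ≤ a + 4 * k * n := by
  have hak : a ≤ k * k := hk ▸ le_ceil_sqrt_mul_self a
  refine ⟨(grid k n).image (blockSet n), ?_, fun G hGF hG => ?_⟩
  · rw [card_image_of_injOn (blockSet_injOn k n)]
    simp [grid, sq]
  set P := {v ∈ grid k n | blockSet n v ∈ G}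
  have hGP : G ⊆ P.image (blockSet n) := fun X hX => by
    obtain ⟨v, hv, rfl⟩ := mem_image.mp (hGF hX)
    exact mem_image_of_mem _ (mem_filter.mpr ⟨hv, hX⟩)
  calc #G ≤ #P := (card_le_card hGP).trans card_image_le
    _ ≤ a + 4 * k * n := card_le_of_forall_isInterior_card_lt (filter_subset _ _) hak fun v hv hvI =>
      hG.card_filter_toLex_lt_lt ha (filter_subset _ _) (fun w hw => (mem_filter.mp hw).2) hv hvI

/-- For `a ≥ 2`, `k = ⌈√a⌉` and every positive integer `n`, there exists a family
of `k·n²` distinct finite sets in which every `a`-union-free subfamily has size at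
most `a + 4kn`. -/
theorem exists_family_small_aUnionFree (a k : ℕ) (ha : 2 ≤ a)
    (hk : k = ⌈Real.sqrt a⌉₊) (n : ℕ) (hn : 0 < n) :
    ∃ F : Finset (Finset ℕ), F.card = k * n ^ 2 ∧
      ∀ G ⊆ F, AUnionFree a G → G.card ≤ a + 4 * k * n :=
  exists_family_small_aUnionFree_general a k ha hk n
end
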